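/- The canonical successor S on complete types is fully confluent: (forth) if Φ≤Ψ then S(Φ)≤S(Ψ); (back–up) if Ψ=S(Φ) and Ψ≤Θ then there is Υ with Φ≤Υ and S(Υ)=Θ; (back–down) if Ψ=S(Φ) and Θ≤Ψ then there is Υ with Υ≤Φ and S(Υ)=Θ. -/

import Mathlib

/-- Formulas of the Gödel temporal language. -/
inductive GF where
  | var : Nat → GF
  | and : GF → GF → GF
  | or : GF → GF → GF
  | imp : GF → GF → GF
  | coimp : GF → GF → GF
  | next : GF → GF
  | dia : GF → GF
  | box : GF → GF
deriving DecidableEq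

/-- ⊥ := p ⇐ p -/
def GF.bot : GF := .coimp (.var 0) (.var 0)
/-- ⊤ := p ⇒ p -/
def GF.top : GF := .imp (.var 0) (.var 0)
/-- ¬φ := φ ⇒ ⊥ -/
def GF.neg (φ : GF) : GF := .imp φ .bot
/-- φ ⟺ ψ := (φ⇒ψ) ∧ (ψ⇒φ) -/
def GF.iffF (φ ψ : GF) : GF := .and (.imp φ ψ) (.imp ψ φ)

/-- The deductive calculus GTL. Intuitionistic tautologies are generated by a
standard Hilbert-style axiomatization of intuitionistic propositional logic. -/
inductive GTL : GF → Prop where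
  -- intuitionistic axioms
  | i1 (φ ψ : GF) : GTL (.imp φ (.imp ψ φ))
  | i2 (φ ψ χ : GF) : GTL (.imp (.imp φ (.imp ψ χ)) (.imp (.imp φ ψ) (.imp φ χ)))
  | i3 (φ ψ : GF) : GTL (.imp (.and φ ψ) φ)
  | i4 (φ ψ : GF) : GTL (.imp (.and φ ψ) ψ)
  | i5 (φ ψ : GF) : GTL (.imp φ (.imp ψ (.and φ ψ)))
  | i6 (φ ψ : GF) : GTL (.imp φ (.or φ ψ))
  | i7 (φ ψ : GF) : GTL (.imp ψ (.or φ ψ))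
  | i8 (φ ψ χ : GF) : GTL (.imp (.imp φ χ) (.imp (.imp ψ χ) (.imp (.or φ ψ) χ)))
  | i9 (φ : GF) : GTL (.imp .bot φ)
  -- H-B axioms and rules
  | hb1 (φ ψ : GF) : GTL (.imp φ (.or ψ (.coimp φ ψ)))
  | hbMon {φ ψ : GF} (θ : GF) : GTL (.imp φ ψ) → GTL (.imp (.coimp φ θ) (.coimp ψ θ))
  | hbDis {φ ψ γ : GF} : GTL (.imp φ (.or ψ γ)) → GTL (.imp (.coimp φ ψ) γ)
  -- linearity axioms
  | lin (φ ψ : GF) : GTL (.or (.imp φ ψ) (.imp ψ φ))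
  | colin (φ ψ : GF) : GTL (GF.neg (.and (.coimp φ ψ) (.coimp ψ φ)))
  -- temporal axioms
  | nBot : GTL (GF.neg (.next .bot))
  | nOr (φ ψ : GF) : GTL (.imp (.next (.or φ ψ)) (.or (.next φ) (.next ψ)))
  | nAnd (φ ψ : GF) : GTL (.imp (.and (.next φ) (.next ψ)) (.next (.and φ ψ)))
  | nImp (φ ψ : GF) : GTL (GF.iffF (.next (.imp φ ψ)) (.imp (.next φ) (.next ψ)))
  | kBox (φ ψ : GF) : GTL (.imp (.box (.imp φ ψ)) (.imp (.box φ) (.box ψ)))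
  | kDia (φ ψ : GF) : GTL (.imp (.box (.imp φ ψ)) (.imp (.dia φ) (.dia ψ)))
  | boxFix (φ : GF) : GTL (.imp (.box φ) (.and φ (.next (.box φ))))
  | diaFix (φ : GF) : GTL (.imp (.or φ (.next (.dia φ))) (.dia φ))
  | indBox (φ : GF) : GTL (.imp (.box (.imp φ (.next φ))) (.imp φ (.box φ)))
  | indDia (φ : GF) : GTL (.imp (.box (.imp (.next φ) φ)) (.imp (.dia φ) φ))
  -- back–up confluence axiom
  | backup (φ ψ : GF) : GTL (.imp (.next (.coimp φ ψ)) (.coimp (.next φ) (.next ψ)))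
  -- standard modal rules
  | mp {φ ψ : GF} : GTL φ → GTL (.imp φ ψ) → GTL ψ
  | necN {φ : GF} : GTL φ → GTL (.next φ)
  | necBox {φ : GF} : GTL φ → GTL (.box φ)

/-- Finite conjunction (⋀∅ = ⊤). -/
def GF.conj : List GF → GF := fun l => l.foldr .and .top
/-- Finite disjunction (⋁∅ = ⊥). -/
def GF.disj : List GF → GF := fun l => l.foldr .or .bot

/-- Gentzen-style consequence: Γ ⊢ Δ iff ⋀Γ' ⇒ ⋁Δ' ∈ GTL for some finite
Γ' ⊆ Γ, Δ' ⊆ Δ. -/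
def GSeq (Γ Δ : Set GF) : Prop :=
  ∃ l m : List GF, (∀ φ ∈ l, φ ∈ Γ) ∧ (∀ φ ∈ m, φ ∈ Δ) ∧
    GTL (.imp (GF.conj l) (GF.disj m))

/-- A complete type: a consistent saturated pair. -/
def CompleteType (P N : Set GF) : Prop :=
  ¬ GSeq P N ∧ ∀ φ : GF, φ ∈ P ∨ φ ∈ N

/-- The canonical order: Φ ≤ Ψ iff Φ⁻ ⊆ Ψ⁻ and Φ⁺ ⊇ Ψ⁺. -/
def TLe (Φ Ψ : Set GF × Set GF) : Prop := Φ.2 ⊆ Ψ.2 ∧ Ψ.1 ⊆ Φ.1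

/-- The canonical successor: S(Φ) = (⊖Φ⁺, ⊖Φ⁻). -/
def TSucc (Φ : Set GF × Set GF) : Set GF × Set GF :=
  ({φ | GF.next φ ∈ Φ.1}, {φ | GF.next φ ∈ Φ.2})

/-!
Forth is immediate. For back–up and back–down the type Υ is a Lindenbaum extension of
(○Θ⁺, Φ⁻ ∪ ○Θ⁻), resp. of (Φ⁺ ∪ ○Θ⁺, ○Θ⁻); since Φ, Θ and Υ are complete, these inclusions
already force Φ ≤ Υ, resp. Υ ≤ Φ, and S(Υ) = Θ. What remains is the consistency of the two pairs.

Back–up: if ○⋀a ⊢ ⋁m, ○⋁b with a ⊆ Θ⁺, b ⊆ Θ⁻ and m ⊆ Φ⁻, then ⋀a ⇐ ⋁b belongs to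
Θ⁺ ⊆ ⊖Φ⁺, because ⋀a ⇒ ⋁b ∨ (⋀a ⇐ ⋁b). The rule for ⇐ turns ○⋀a ⇒ ○⋁b ∨ ⋁m into
(○⋀a ⇐ ○⋁b) ⇒ ⋁m, and the back–up axiom ○(⋀a ⇐ ⋁b) ⇒ (○⋀a ⇐ ○⋁b) then gives Φ⁺ ⊢ Φ⁻.

Back–down: if Φ⁺, ○⋀a ⊢ ○⋁b, then ⋀a ⇒ ⋁b belongs to Θ⁻ ⊆ ⊖Φ⁻, while the deduction theorem
and ○(φ ⇒ ψ) ⟺ (○φ ⇒ ○ψ) give Φ⁺ ⊢ ○(⋀a ⇒ ⋁b).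
-/

theorem List.exists_map_eq_of_forall_mem_image {α β : Type*} {f : α → β} {s : Set α}
    {l : List β} (h : ∀ x ∈ l, x ∈ f '' s) : ∃ a : List α, (∀ x ∈ a, x ∈ s) ∧ a.map f = l := by
  induction l with
  | nil => exact ⟨[], by simp, rfl⟩
  | cons y l ih =>
    obtain ⟨x, hx, rfl⟩ := h y List.mem_cons_self
    obtain ⟨a, ha, rfl⟩ := ih fun z hz => h z (List.mem_cons_of_mem _ hz)
    exact ⟨x :: a, by simpa [hx] using ha, rfl⟩

theorem List.exists_cover_of_forall_or {α : Type*} {p q : α → Prop} {l : List α}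
    (h : ∀ x ∈ l, p x ∨ q x) :
    ∃ l₁ l₂ : List α, (∀ x ∈ l₁, p x) ∧ (∀ x ∈ l₂, q x) ∧ ∀ x ∈ l, x ∈ l₁ ∨ x ∈ l₂ := by
  classical
  refine ⟨l.filter (p ·), l.filter (¬ p ·), fun x hx => ?_, fun x hx => ?_, fun x hx => ?_⟩
  · simpa using (List.mem_filter.1 hx).2
  · obtain ⟨hxl, hpx⟩ := List.mem_filter.1 hx
    exact (h x hxl).resolve_left (by simpa using hpx)
  · by_cases hpx : p x <;> simp [hx, hpx]

theorem IsChain.exists_mem_forall_mem_of_monotone {α β : Type*} [Preorder α] {c : Set α}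
    (hc : IsChain (· ≤ ·) c) (hne : c.Nonempty) {f : α → Set β} (hf : Monotone f) {l : List β}
    (hl : ∀ x ∈ l, x ∈ ⋃ i ∈ c, f i) : ∃ i ∈ c, ∀ x ∈ l, x ∈ f i := by
  classical
  obtain ⟨i, hi, hli⟩ := DirectedOn.exists_mem_subset_of_finset_subset_biUnion (s := l.toFinset)
    hne (hc.directedOn.mono fun _ _ h => hf h) fun x hx => hl x (List.mem_toFinset.1 hx)
  exact ⟨i, hi, fun x hx => hli (List.mem_toFinset.2 hx)⟩

namespace GTL

/-- Consequence from hypotheses `Γ` by modus ponens over the theorems of GTL; necessitation is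
applied to theorems only, which keeps the deduction theorem valid. -/
inductive Deriv : List GF → GF → Prop
  | ax {Γ : List GF} {φ : GF} : GTL φ → Deriv Γ φ
  | hyp {Γ : List GF} {φ : GF} : φ ∈ Γ → Deriv Γ φ
  | mp {Γ : List GF} {φ ψ : GF} : Deriv Γ (.imp φ ψ) → Deriv Γ φ → Deriv Γ ψ

namespace Deriv

variable {Γ Δ l m m₁ m₂ : List GF} {φ ψ χ : GF}

theorem subst (h : Deriv Γ φ) (hΓ : ∀ γ ∈ Γ, Deriv Δ γ) : Deriv Δ φ := by
  induction h with
  | ax h => exact ax h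
  | hyp h => exact hΓ _ h
  | mp _ _ ih₁ ih₂ => exact mp ih₁ ih₂

theorem weaken (h : Deriv Γ φ) (hΓ : ∀ γ ∈ Γ, γ ∈ Δ) : Deriv Δ φ :=
  h.subst fun γ hγ => hyp (hΓ γ hγ)

theorem imp_self : Deriv Γ (.imp φ φ) :=
  mp (mp (ax (i2 φ (.imp φ φ) φ)) (ax (i1 φ (.imp φ φ)))) (ax (i1 φ φ))

theorem imp_intro (h : Deriv (φ :: Γ) ψ) : Deriv Γ (.imp φ ψ) := by
  induction h with
  | ax h => exact mp (ax (i1 _ φ)) (ax h)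
  | hyp hm =>
    rcases List.mem_cons.1 hm with rfl | hm
    · exact imp_self
    · exact mp (ax (i1 _ φ)) (hyp hm)
  | mp _ _ ih₁ ih₂ => exact mp (mp (ax (i2 φ _ _)) ih₁) ih₂

theorem and_intro (h₁ : Deriv Γ φ) (h₂ : Deriv Γ ψ) : Deriv Γ (.and φ ψ) :=
  mp (mp (ax (i5 φ ψ)) h₁) h₂

theorem and_left (h : Deriv Γ (.and φ ψ)) : Deriv Γ φ := mp (ax (i3 φ ψ)) h

theorem and_right (h : Deriv Γ (.and φ ψ)) : Deriv Γ ψ := mp (ax (i4 φ ψ)) h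

theorem or_inl (h : Deriv Γ φ) : Deriv Γ (.or φ ψ) := mp (ax (i6 φ ψ)) h

theorem or_inr (h : Deriv Γ ψ) : Deriv Γ (.or φ ψ) := mp (ax (i7 φ ψ)) h

theorem or_elim (h : Deriv Γ (.or φ ψ)) (h₁ : Deriv (φ :: Γ) χ) (h₂ : Deriv (ψ :: Γ) χ) :
    Deriv Γ χ :=
  mp (mp (mp (ax (i8 φ ψ χ)) (imp_intro h₁)) (imp_intro h₂)) h

theorem conj_intro (h : ∀ ψ ∈ l, Deriv Γ ψ) : Deriv Γ (GF.conj l) := by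
  induction l with
  | nil => exact imp_self
  | cons x l ih =>
    exact and_intro (h x List.mem_cons_self) (ih fun ψ hψ => h ψ (List.mem_cons_of_mem _ hψ))

theorem conj_elim (h : Deriv Γ (GF.conj l)) (hψ : ψ ∈ l) : Deriv Γ ψ := by
  induction l with
  | nil => cases hψ
  | cons x l ih =>
    rcases List.mem_cons.1 hψ with rfl | hψ
    · exact h.and_left
    · exact ih h.and_right hψ

theorem disj_intro (hψ : ψ ∈ m) (h : Deriv Γ ψ) : Deriv Γ (GF.disj m) := by
  induction m with
  | nil => cases hψ
  | cons x m ih =>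
    rcases List.mem_cons.1 hψ with rfl | hψ
    · exact or_inl h
    · exact or_inr (ih hψ)

theorem disj_elim (h : Deriv Γ (GF.disj m)) (hm : ∀ ψ ∈ m, Deriv (ψ :: Γ) χ) : Deriv Γ χ := by
  induction m generalizing Γ with
  | nil => exact mp (ax (i9 χ)) h
  | cons x m ih =>
    refine or_elim h (hm x List.mem_cons_self) (ih (hyp List.mem_cons_self) fun ψ hψ => ?_)
    refine (hm ψ (List.mem_cons_of_mem _ hψ)).weaken fun γ hγ => ?_
    rcases List.mem_cons.1 hγ with rfl | hγ
    · exact List.mem_cons_self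
    · exact List.mem_cons_of_mem _ (List.mem_cons_of_mem _ hγ)

theorem disj_mono (h : Deriv Γ (GF.disj m₁)) (hm : ∀ ψ ∈ m₁, ψ ∈ m₂) : Deriv Γ (GF.disj m₂) :=
  h.disj_elim fun ψ hψ => disj_intro (hm ψ hψ) (hyp List.mem_cons_self)

theorem disj_split (h : Deriv Γ (GF.disj m)) (hm : ∀ ψ ∈ m, ψ ∈ m₁ ∨ ψ ∈ m₂) :
    Deriv Γ (.or (GF.disj m₁) (GF.disj m₂)) :=
  h.disj_elim fun ψ hψ => (hm ψ hψ).elim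
    (fun h₁ => or_inl (disj_intro h₁ (hyp List.mem_cons_self)))
    (fun h₂ => or_inr (disj_intro h₂ (hyp List.mem_cons_self)))

theorem of_imp_conj (h : GTL (.imp (GF.conj l) φ)) : Deriv l φ :=
  mp (ax h) (conj_intro fun _ => hyp)

end Deriv

open Deriv

theorem of_deriv_nil {φ : GF} (h : Deriv [] φ) : GTL φ := by
  induction h with
  | ax h => exact h
  | hyp hm => cases hm
  | mp _ _ ih₁ ih₂ => exact GTL.mp ih₂ ih₁

theorem imp_of_deriv {φ ψ : GF} (h : Deriv [φ] ψ) : GTL (.imp φ ψ) :=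
  of_deriv_nil (imp_intro h)

theorem imp_conj_of_deriv {l : List GF} {φ : GF} (h : Deriv l φ) : GTL (.imp (GF.conj l) φ) :=
  imp_of_deriv (h.subst fun _ hγ => conj_elim (hyp List.mem_cons_self) hγ)

theorem next_imp_next {φ ψ : GF} (h : GTL (.imp φ ψ)) : GTL (.imp (.next φ) (.next ψ)) :=
  of_deriv_nil (Deriv.mp (ax (nImp φ ψ)).and_left (ax (necN h)))

theorem next_conj_imp_conj_map_next (a : List GF) :
    GTL (.imp (.next (GF.conj a)) (GF.conj (a.map .next))) := by
  refine imp_of_deriv (conj_intro fun ψ hψ => ?_)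
  obtain ⟨x, hx, rfl⟩ := List.mem_map.1 hψ
  exact Deriv.mp (ax (next_imp_next (imp_of_deriv (conj_elim (hyp List.mem_cons_self) hx))))
    (hyp List.mem_cons_self)

theorem disj_map_next_imp_next_disj (b : List GF) :
    GTL (.imp (GF.disj (b.map .next)) (.next (GF.disj b))) := by
  refine imp_of_deriv (disj_elim (hyp List.mem_cons_self) fun ψ hψ => ?_)
  obtain ⟨x, hx, rfl⟩ := List.mem_map.1 hψ
  exact Deriv.mp (ax (next_imp_next (imp_of_deriv (disj_intro hx (hyp List.mem_cons_self)))))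
    (hyp List.mem_cons_self)

end GTL

open GTL GTL.Deriv

theorem gSeq_iff_exists_deriv {P N : Set GF} :
    GSeq P N ↔ ∃ l m : List GF, (∀ φ ∈ l, φ ∈ P) ∧ (∀ φ ∈ m, φ ∈ N) ∧ Deriv l (GF.disj m) :=
  exists_congr fun _ => exists_congr fun _ => and_congr_right' <| and_congr_right' <|
    ⟨of_imp_conj, imp_conj_of_deriv⟩

theorem GSeq.mono {P P' N N' : Set GF} (hP : P ⊆ P') (hN : N ⊆ N') (h : GSeq P N) :
    GSeq P' N' :=
  let ⟨l, m, hl, hm, H⟩ := h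
  ⟨l, m, fun φ hφ => hP (hl φ hφ), fun φ hφ => hN (hm φ hφ), H⟩

theorem GSeq.cut {P N : Set GF} {φ : GF} (h₁ : GSeq (insert φ P) N)
    (h₂ : GSeq P (insert φ N)) : GSeq P N := by
  obtain ⟨l₁, m₁, hl₁, hm₁, H₁⟩ := gSeq_iff_exists_deriv.1 h₁
  obtain ⟨l₂, m₂, hl₂, hm₂, H₂⟩ := gSeq_iff_exists_deriv.1 h₂
  obtain ⟨lφ, l₁', hlφ, hl₁', hcov₁⟩ := List.exists_cover_of_forall_or (p := (· = φ)) hl₁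
  obtain ⟨mφ, m₂', hmφ, hm₂', hcov₂⟩ := List.exists_cover_of_forall_or (p := (· = φ)) hm₂
  refine gSeq_iff_exists_deriv.2 ⟨l₁' ++ l₂, m₁ ++ m₂', ?_, ?_, ?_⟩
  · simpa [or_imp, forall_and] using ⟨hl₁', hl₂⟩
  · simpa [or_imp, forall_and] using ⟨hm₁, hm₂'⟩
  refine (H₂.weaken fun _ => List.mem_append_right _).disj_elim fun ψ hψ => ?_
  rcases hcov₂ ψ hψ with hψ | hψ
  · obtain rfl := hmφ ψ hψ
    refine (H₁.weaken fun γ hγ => ?_).disj_mono fun _ => List.mem_append_left _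
    rcases hcov₁ γ hγ with hγ | hγ
    · exact hlφ γ hγ ▸ List.mem_cons_self
    · exact List.mem_cons_of_mem _ (List.mem_append_left _ hγ)
  · exact disj_intro (List.mem_append_right _ hψ) (hyp List.mem_cons_self)

theorem not_gSeq_biUnion_of_isChain {c : Set (Set GF × Set GF)} (hc : IsChain (· ≤ ·) c)
    (hne : c.Nonempty) (h : ∀ p ∈ c, ¬ GSeq p.1 p.2) :
    ¬ GSeq (⋃ p ∈ c, p.1) (⋃ p ∈ c, p.2) := by
  rintro ⟨l, m, hl, hm, H⟩
  obtain ⟨p, hp, hlp⟩ := hc.exists_mem_forall_mem_of_monotone hne monotone_fst hl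
  obtain ⟨q, hq, hmq⟩ := hc.exists_mem_forall_mem_of_monotone hne monotone_snd hm
  rcases hc.total hp hq with hpq | hqp
  · exact h q hq (GSeq.mono hpq.1 le_rfl ⟨l, m, hlp, hmq, H⟩)
  · exact h p hp (GSeq.mono le_rfl hqp.2 ⟨l, m, hlp, hmq, H⟩)

theorem exists_completeType_of_not_gSeq {P₀ N₀ : Set GF} (h : ¬ GSeq P₀ N₀) :
    ∃ P N : Set GF, CompleteType P N ∧ P₀ ⊆ P ∧ N₀ ⊆ N := by
  obtain ⟨⟨P, N⟩, ⟨hP₀, hN₀⟩, hmax⟩ :=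
    zorn_le_nonempty₀ {p : Set GF × Set GF | ¬ GSeq p.1 p.2} (fun c hcS hc p hp =>
      ⟨(⋃ q ∈ c, q.1, ⋃ q ∈ c, q.2), not_gSeq_biUnion_of_isChain hc ⟨p, hp⟩ hcS,
        fun q hq => ⟨Set.subset_biUnion_of_mem hq, Set.subset_biUnion_of_mem hq⟩⟩) (P₀, N₀) h
  refine ⟨P, N, ⟨hmax.1, fun φ => ?_⟩, hP₀, hN₀⟩
  by_contra! hφ
  refine hmax.1 (GSeq.cut (φ := φ) ?_ ?_) <;> by_contra hcons
  · exact hφ.1 ((hmax.2 (y := (insert φ P, N)) hcons ⟨Set.subset_insert φ P, le_rfl⟩).1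
      (Set.mem_insert φ P))
  · exact hφ.2 ((hmax.2 (y := (P, insert φ N)) hcons ⟨le_rfl, Set.subset_insert φ N⟩).2
      (Set.mem_insert φ N))

namespace CompleteType

variable {P N : Set GF} {φ : GF} {a b : List GF}

theorem not_deriv (h : CompleteType P N) {l m : List GF} (hl : ∀ φ ∈ l, φ ∈ P)
    (hm : ∀ φ ∈ m, φ ∈ N) : ¬ Deriv l (GF.disj m) :=
  fun hd => h.1 (gSeq_iff_exists_deriv.2 ⟨l, m, hl, hm, hd⟩)

theorem not_mem_neg (h : CompleteType P N) (hφ : φ ∈ P) : φ ∉ N := fun hN =>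
  h.not_deriv (l := [φ]) (m := [φ]) (by simpa using hφ) (by simpa using hN)
    (disj_intro List.mem_cons_self (hyp List.mem_cons_self))

theorem mem_pos_of_not_mem_neg (h : CompleteType P N) (hφ : φ ∉ N) : φ ∈ P :=
  (h.2 φ).resolve_right hφ

theorem coimp_mem_pos (h : CompleteType P N) (ha : ∀ φ ∈ a, φ ∈ P) (hb : ∀ φ ∈ b, φ ∈ N) :
    GF.coimp (GF.conj a) (GF.disj b) ∈ P := by
  refine h.mem_pos_of_not_mem_neg fun hχ =>
    h.not_deriv ha (m := .coimp (GF.conj a) (GF.disj b) :: b) (by simpa [hχ] using hb) ?_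
  exact or_elim (Deriv.mp (ax (hb1 _ _)) (conj_intro fun _ => hyp))
    (or_inr (hyp List.mem_cons_self)) (or_inl (hyp List.mem_cons_self))

theorem imp_mem_neg (h : CompleteType P N) (ha : ∀ φ ∈ a, φ ∈ P) (hb : ∀ φ ∈ b, φ ∈ N) :
    GF.imp (GF.conj a) (GF.disj b) ∈ N :=
  (h.2 _).resolve_left fun hξ => h.not_deriv (l := _ :: a) (by simpa [hξ] using ha) hb
    (Deriv.mp (hyp List.mem_cons_self) (conj_intro fun _ hx => hyp (List.mem_cons_of_mem _ hx)))

end CompleteType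

theorem TLe.tSucc {Φ Ψ : Set GF × Set GF} (h : TLe Φ Ψ) : TLe (TSucc Φ) (TSucc Ψ) :=
  ⟨fun _ hφ => h.1 hφ, fun _ hφ => h.2 hφ⟩

theorem tLe_of_neg_subset {Φ Υ : Set GF × Set GF} (hΦ : CompleteType Φ.1 Φ.2)
    (hΥ : CompleteType Υ.1 Υ.2) (h : Φ.2 ⊆ Υ.2) : TLe Φ Υ :=
  ⟨h, fun _ hφ => hΦ.mem_pos_of_not_mem_neg fun hN => hΥ.not_mem_neg hφ (h hN)⟩

theorem tLe_of_pos_subset {Φ Υ : Set GF × Set GF} (hΦ : CompleteType Φ.1 Φ.2)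
    (hΥ : CompleteType Υ.1 Υ.2) (h : Φ.1 ⊆ Υ.1) : TLe Υ Φ :=
  ⟨fun _ hφ => (hΦ.2 _).resolve_left fun hP => hΥ.not_mem_neg (h hP) hφ, h⟩

theorem tSucc_eq_of_image_subset {Υ Θ : Set GF × Set GF} (hΥ : CompleteType Υ.1 Υ.2)
    (hΘ : CompleteType Θ.1 Θ.2) (h₁ : GF.next '' Θ.1 ⊆ Υ.1) (h₂ : GF.next '' Θ.2 ⊆ Υ.2) :
    TSucc Υ = Θ := by
  rw [Set.image_subset_iff] at h₁ h₂
  refine Prod.ext (Set.ext fun φ => ⟨fun hφ => ?_, (h₁ ·)⟩)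
    (Set.ext fun φ => ⟨fun hφ => ?_, (h₂ ·)⟩)
  · exact hΘ.mem_pos_of_not_mem_neg fun hN => hΥ.not_mem_neg hφ (h₂ hN)
  · exact (hΘ.2 φ).resolve_left fun hP => hΥ.not_mem_neg (h₁ hP) hφ

theorem not_gSeq_backUp {Φ Θ : Set GF × Set GF} (hΦ : CompleteType Φ.1 Φ.2)
    (hΘ : CompleteType Θ.1 Θ.2) (hle : TLe (TSucc Φ) Θ) :
    ¬ GSeq (GF.next '' Θ.1) (Φ.2 ∪ GF.next '' Θ.2) := by
  rw [gSeq_iff_exists_deriv]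
  rintro ⟨l, m, hl, hm, H⟩
  obtain ⟨a, ha, rfl⟩ := List.exists_map_eq_of_forall_mem_image hl
  obtain ⟨m₁, m₂, hm₁, hm₂, hcov⟩ := List.exists_cover_of_forall_or hm
  obtain ⟨b, hb, rfl⟩ := List.exists_map_eq_of_forall_mem_image hm₂
  have hnext : GTL (.imp (.next (GF.conj a)) (.or (.next (GF.disj b)) (GF.disj m₁))) := by
    have H' := H.subst (Δ := [.next (GF.conj a)]) fun _ hγ =>
      conj_elim (Deriv.mp (ax (next_conj_imp_conj_map_next a)) (hyp List.mem_cons_self)) hγ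
    exact imp_of_deriv (or_elim (H'.disj_split hcov) (or_inr (hyp List.mem_cons_self))
      (or_inl (Deriv.mp (ax (disj_map_next_imp_next_disj b)) (hyp List.mem_cons_self))))
  exact hΦ.not_deriv (l := [.next (.coimp (GF.conj a) (GF.disj b))])
    (List.forall_mem_singleton.2 (hle.2 (hΘ.coimp_mem_pos ha hb))) hm₁
    (Deriv.mp (ax (hbDis hnext)) (Deriv.mp (ax (backup _ _)) (hyp List.mem_cons_self)))

theorem not_gSeq_backDown {Φ Θ : Set GF × Set GF} (hΦ : CompleteType Φ.1 Φ.2)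
    (hΘ : CompleteType Θ.1 Θ.2) (hle : TLe Θ (TSucc Φ)) :
    ¬ GSeq (Φ.1 ∪ GF.next '' Θ.1) (GF.next '' Θ.2) := by
  rw [gSeq_iff_exists_deriv]
  rintro ⟨l, m, hl, hm, H⟩
  obtain ⟨l₁, l₂, hl₁, hl₂, hcov⟩ := List.exists_cover_of_forall_or hl
  obtain ⟨a, ha, rfl⟩ := List.exists_map_eq_of_forall_mem_image hl₂
  obtain ⟨b, hb, rfl⟩ := List.exists_map_eq_of_forall_mem_image hm
  have hnext : Deriv (.next (GF.conj a) :: l₁) (.next (GF.disj b)) := by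
    refine Deriv.mp (ax (disj_map_next_imp_next_disj b)) (H.subst fun γ hγ => ?_)
    rcases hcov γ hγ with hγ | hγ
    · exact hyp (List.mem_cons_of_mem _ hγ)
    · exact conj_elim (Deriv.mp (ax (next_conj_imp_conj_map_next a)) (hyp List.mem_cons_self)) hγ
  exact hΦ.not_deriv hl₁ (m := [.next (.imp (GF.conj a) (GF.disj b))])
    (List.forall_mem_singleton.2 (hle.1 (hΘ.imp_mem_neg ha hb)))
    (disj_intro List.mem_cons_self (Deriv.mp (ax (nImp _ _)).and_right (imp_intro hnext)))

/-- The canonical successor is fully confluent. -/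
theorem stmt18 :
    (∀ Φ Ψ : Set GF × Set GF, CompleteType Φ.1 Φ.2 → CompleteType Ψ.1 Ψ.2 →
      TLe Φ Ψ → TLe (TSucc Φ) (TSucc Ψ)) ∧
    (∀ Φ Θ : Set GF × Set GF, CompleteType Φ.1 Φ.2 → CompleteType Θ.1 Θ.2 →
      TLe (TSucc Φ) Θ →
      ∃ Υ : Set GF × Set GF, CompleteType Υ.1 Υ.2 ∧ TLe Φ Υ ∧ TSucc Υ = Θ) ∧
    (∀ Φ Θ : Set GF × Set GF, CompleteType Φ.1 Φ.2 → CompleteType Θ.1 Θ.2 →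
      TLe Θ (TSucc Φ) →
      ∃ Υ : Set GF × Set GF, CompleteType Υ.1 Υ.2 ∧ TLe Υ Φ ∧ TSucc Υ = Θ) := by
  refine ⟨fun _ _ _ _ h => h.tSucc, fun Φ Θ hΦ hΘ hle => ?_, fun Φ Θ hΦ hΘ hle => ?_⟩
  · obtain ⟨P, N, hΥ, hP, hN⟩ := exists_completeType_of_not_gSeq (not_gSeq_backUp hΦ hΘ hle)
    exact ⟨(P, N), hΥ, tLe_of_neg_subset hΦ hΥ (Set.subset_union_left.trans hN),
      tSucc_eq_of_image_subset hΥ hΘ hP (Set.subset_union_right.trans hN)⟩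
  · obtain ⟨P, N, hΥ, hP, hN⟩ := exists_completeType_of_not_gSeq (not_gSeq_backDown hΦ hΘ hle)
    exact ⟨(P, N), hΥ, tLe_of_pos_subset hΦ hΥ (Set.subset_union_left.trans hP),
      tSucc_eq_of_image_subset hΥ hΘ (Set.subset_union_right.trans hP) hN⟩
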